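/- Given a Szegő system, fix m ≥ 1, d-tuples Z = (Z_1,…,Z_d) and W = (W_1,…,W_d) of m×m complex matrices, and n ∈ ℕ. Then the summation formula holds: φ^#_{σ(n)}(Z)^* φ^#_{σ(n)}(W) − ∑_{σ : |σ| ≤ n} φ_σ(Z)^* φ_σ(W) = − ∑_{k=1}^d ∑_{σ : |σ| ≤ n−1} φ_σ(Z)^* Z_k^* W_k φ_σ(W), where the sums are over all words of the indicated lengths (the right-hand side is empty when n = 0). -/

import Mathlib

open scoped BigOperators ComplexOrder

/-- The shortlex (length-then-lexicographic) order on words in `F_d^+`. -/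
def ShortlexLE {d : ℕ} (σ τ : List (Fin d)) : Prop :=
  σ.length < τ.length ∨ (σ.length = τ.length ∧ (σ = τ ∨ List.Lex (· < ·) σ τ))

/-- The defect `d_σ := √(1 - |γ_σ|²)`. -/
noncomputable def defect {d : ℕ} (γ : List (Fin d) → ℂ) (σ : List (Fin d)) : ℝ :=
  Real.sqrt (1 - ‖γ σ‖ ^ 2)

/-- A Szegő system: Verblunsky coefficients `γ : F_d^+ → ℂ` with `γ_∅ = 0`, `|γ_σ| < 1`,
together with families of noncommutative polynomials `φ, φr (= φ^#)` with `φ_∅ = φ^#_∅ = 1`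
satisfying the Szegő recurrences, where `e : ℕ ≃ F_d^+` is the shortlex order isomorphism and
`τ - 1 := e (e⁻¹ τ - 1)` is the immediate shortlex predecessor. -/
structure SzegoSystem (d : ℕ) where
  /-- the shortlex enumeration of `F_d^+` -/
  e : ℕ ≃ List (Fin d)
  /-- `e` is an order isomorphism onto the shortlex order -/
  he : ∀ m n : ℕ, m ≤ n ↔ ShortlexLE (e m) (e n)
  /-- the Verblunsky coefficients -/
  γ : List (Fin d) → ℂ
  hγ0 : γ [] = 0
  hγlt : ∀ σ : List (Fin d), ‖γ σ‖ < 1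
  /-- the orthonormal polynomials -/
  φ : List (Fin d) → FreeAlgebra ℂ (Fin d)
  /-- the reverse polynomials `φ^#` -/
  φr : List (Fin d) → FreeAlgebra ℂ (Fin d)
  hφ0 : φ [] = 1
  hφr0 : φr [] = 1
  recφ : ∀ (k : Fin d) (σ : List (Fin d)),
    φ (k :: σ) = (((defect γ (k :: σ) : ℝ) : ℂ))⁻¹ •
      (FreeAlgebra.ι ℂ k * φ σ - γ (k :: σ) • φr (e (e.symm (k :: σ) - 1)))
  recφr : ∀ (k : Fin d) (σ : List (Fin d)),
    φr (k :: σ) = (((defect γ (k :: σ) : ℝ) : ℂ))⁻¹ •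
      ((-(starRingEnd ℂ (γ (k :: σ)))) • (FreeAlgebra.ι ℂ k * φ σ) +
        φr (e (e.symm (k :: σ) - 1)))

/-- Evaluation of a noncommutative polynomial at a `d`-tuple of `m×m` matrices. -/
noncomputable def evalM {d m : ℕ} (A : Fin d → Matrix (Fin m) (Fin m) ℂ) :
    FreeAlgebra ℂ (Fin d) →ₐ[ℂ] Matrix (Fin m) (Fin m) ℂ :=
  FreeAlgebra.lift ℂ A

/-- The shortlex-largest word of length `n`: the largest generator repeated `n` times. -/
def sigmaWord (d : ℕ) (hd : 1 ≤ d) (n : ℕ) : List (Fin d) :=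
  List.replicate n (⟨d - 1, by omega⟩ : Fin d)

/-! The recurrences say that `(φ_{kσ}, φ^#_{kσ})` arises from `(Z_k φ_σ, φ^#_{kσ-1})` through
the matrix `d_{kσ}⁻¹ [[1, -γ_{kσ}], [-conj γ_{kσ}, 1]]`, which preserves the indefinite form
`(x, y) ↦ x(Z)^* x(W) - y(Z)^* y(W)`. Hence along the shortlex enumeration the increment of
`φ^#_τ(Z)^* φ^#_τ(W)` from `τ - 1` to `τ = kσ` is `φ_τ(Z)^* φ_τ(W) - (Z_k φ_σ)(Z)^* (Z_k φ_σ)(W)`.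
Summing from `∅` to `σ(n)`, i.e. over all words of length at most `n`, telescopes to the formula. -/

lemma star_mul_sub_star_mul_of_hyperbolic_rotation {R : Type*} [Ring R] [StarRing R]
    [Algebra ℂ R] [StarModule ℂ R] {c : ℝ} {g : ℂ} (h : c ^ 2 * (1 - ‖g‖ ^ 2) = 1)
    (a b a' b' : R) :
    star ((c : ℂ) • (a - g • b)) * ((c : ℂ) • (a' - g • b')) -
        star ((c : ℂ) • ((-(starRingEnd ℂ g)) • a + b)) *
          ((c : ℂ) • ((-(starRingEnd ℂ g)) • a' + b')) =
      star a * a' - star b * b' := by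
  have hg : (c : ℂ) ^ 2 * (1 - g * starRingEnd ℂ g) = 1 := by
    rw [Complex.mul_conj, Complex.normSq_eq_norm_sq]; exact_mod_cast h
  simp only [star_smul, star_sub, star_add, star_neg, Complex.star_def, Complex.conj_ofReal,
    map_mul, Complex.conj_conj, smul_mul_assoc, mul_smul_comm, smul_smul, sub_mul, mul_sub, add_mul,
    mul_add, smul_sub, smul_add, neg_smul, smul_neg, neg_mul, mul_neg]
  match_scalars <;> first | ring1 | linear_combination hg | linear_combination -hg

lemma inv_defect_sq_mul {d : ℕ} {γ : List (Fin d) → ℂ} {σ : List (Fin d)} (h : ‖γ σ‖ < 1) :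
    (defect γ σ)⁻¹ ^ 2 * (1 - ‖γ σ‖ ^ 2) = 1 := by
  have hpos : 0 < 1 - ‖γ σ‖ ^ 2 := by nlinarith [norm_nonneg (γ σ)]
  rw [defect, inv_pow, Real.sq_sqrt hpos.le, inv_mul_cancel₀ hpos.ne']

lemma List.eq_or_lex_replicate_of_forall_le {α : Type*} [PartialOrder α] {t : α}
    (ht : ∀ a, a ≤ t) (τ : List α) :
    τ = replicate τ.length t ∨ Lex (· < ·) τ (replicate τ.length t) := by
  induction τ with
  | nil => exact Or.inl rfl
  | cons a τ ih =>
    rw [length_cons, replicate_succ]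
    rcases (ht a).lt_or_eq with hlt | rfl
    · exact Or.inr (Lex.rel hlt)
    · exact ih.imp (congrArg _) Lex.cons

lemma shortlexLE_sigmaWord_iff {d : ℕ} (hd : 1 ≤ d) {n : ℕ} {τ : List (Fin d)} :
    ShortlexLE τ (sigmaWord d hd n) ↔ τ.length ≤ n := by
  simp only [ShortlexLE, sigmaWord, List.length_replicate]
  refine ⟨by omega, fun h => h.lt_or_eq.imp id fun h => ⟨h, ?_⟩⟩
  rw [← h]
  exact List.eq_or_lex_replicate_of_forall_le (fun a => Fin.le_def.mpr (by simp; omega)) τ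

lemma Fintype.sum_fin_succ_ofFn {α M : Type*} [Fintype α] [AddCommMonoid M] (G : List α → M)
    (l : ℕ) :
    ∑ f : Fin (l + 1) → α, G (List.ofFn f) = ∑ a, ∑ f : Fin l → α, G (a :: List.ofFn f) := by
  rw [← Fintype.sum_prod_type']
  exact Fintype.sum_equiv (Fin.consEquiv fun _ => α).symm _ _ fun f =>
    congrArg G (List.ofFn_succ (f := f))

variable {d m : ℕ}

noncomputable def sesqEval (Z W : Fin d → Matrix (Fin m) (Fin m) ℂ) (p : FreeAlgebra ℂ (Fin d)) :
    Matrix (Fin m) (Fin m) ℂ :=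
  star (evalM Z p) * evalM W p

lemma sesqEval_one (Z W : Fin d → Matrix (Fin m) (Fin m) ℂ) : sesqEval Z W 1 = 1 := by
  simp [sesqEval]

lemma sesqEval_zero (Z W : Fin d → Matrix (Fin m) (Fin m) ℂ) : sesqEval Z W 0 = 0 := by
  simp [sesqEval]

lemma sesqEval_ι_mul (Z W : Fin d → Matrix (Fin m) (Fin m) ℂ) (k : Fin d)
    (p : FreeAlgebra ℂ (Fin d)) :
    sesqEval Z W (FreeAlgebra.ι ℂ k * p) = star (evalM Z p) * (star (Z k) * W k) * evalM W p := by
  simp only [sesqEval, map_mul, evalM, FreeAlgebra.lift_ι_apply, star_mul, mul_assoc]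

namespace SzegoSystem

variable (S : SzegoSystem d)

lemma e_zero : S.e 0 = [] := by
  have h := (S.he 0 (S.e.symm [])).mp (Nat.zero_le _)
  rw [S.e.apply_symm_apply] at h
  rcases h with h | ⟨h, -⟩
  · simp at h
  · simpa using h

lemma e_succ_ne_nil (j : ℕ) : S.e (j + 1) ≠ [] := by
  rw [← S.e_zero, Ne, S.e.injective.eq_iff]
  exact j.succ_ne_zero

lemma le_symm_sigmaWord_iff (hd : 1 ≤ d) {n j : ℕ} :
    j ≤ S.e.symm (sigmaWord d hd n) ↔ (S.e j).length ≤ n := by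
  rw [S.he, S.e.apply_symm_apply, shortlexLE_sigmaWord_iff]

lemma sum_range_symm_sigmaWord {M : Type*} [AddCommMonoid M] (hd : 1 ≤ d) (n : ℕ)
    (G : List (Fin d) → M) :
    ∑ j ∈ Finset.range (S.e.symm (sigmaWord d hd n) + 1), G (S.e j) =
      ∑ l ∈ Finset.range (n + 1), ∑ f : Fin l → Fin d, G (List.ofFn f) := by
  rw [Finset.sum_sigma']
  refine Finset.sum_equiv (S.e.trans List.equivSigmaTuple) (fun j => ?_) (fun j _ => ?_)
  · simp [S.le_symm_sigmaWord_iff hd]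
  · simp [List.equivSigmaTuple]

noncomputable def ιMulφ : List (Fin d) → FreeAlgebra ℂ (Fin d)
  | [] => 0
  | k :: σ => FreeAlgebra.ι ℂ k * S.φ σ

lemma sesqEval_φ_cons_sub_sesqEval_φr_cons (Z W : Fin d → Matrix (Fin m) (Fin m) ℂ) (k : Fin d)
    (σ : List (Fin d)) :
    sesqEval Z W (S.φ (k :: σ)) - sesqEval Z W (S.φr (k :: σ)) =
      sesqEval Z W (FreeAlgebra.ι ℂ k * S.φ σ) -
        sesqEval Z W (S.φr (S.e (S.e.symm (k :: σ) - 1))) := by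
  rw [S.recφ, S.recφr, ← Complex.ofReal_inv]
  simp only [sesqEval, map_smul, map_sub, map_add]
  exact star_mul_sub_star_mul_of_hyperbolic_rotation (inv_defect_sq_mul (S.hγlt _)) ..

lemma sesqEval_φr_e_eq_sum (Z W : Fin d → Matrix (Fin m) (Fin m) ℂ) (M : ℕ) :
    sesqEval Z W (S.φr (S.e M)) =
      ∑ j ∈ Finset.range (M + 1),
        (sesqEval Z W (S.φ (S.e j)) - sesqEval Z W (S.ιMulφ (S.e j))) := by
  induction M with
  | zero => simp [e_zero, hφ0, hφr0, ιMulφ, sesqEval_one, sesqEval_zero]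
  | succ M ih =>
    obtain ⟨k, σ, hkσ⟩ := List.exists_cons_of_ne_nil (S.e_succ_ne_nil M)
    have hstep := S.sesqEval_φ_cons_sub_sesqEval_φr_cons Z W k σ
    rw [← hkσ, S.e.symm_apply_apply, Nat.add_sub_cancel] at hstep
    rw [Finset.sum_range_succ, ← ih, hkσ, ιMulφ, ← hkσ]
    exact eq_add_of_sub_eq' (sub_eq_sub_iff_sub_eq_sub.mp hstep).symm

lemma sum_length_lt_succ_sesqEval_ιMulφ (Z W : Fin d → Matrix (Fin m) (Fin m) ℂ) (n : ℕ) :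
    ∑ l ∈ Finset.range (n + 1), ∑ f : Fin l → Fin d, sesqEval Z W (S.ιMulφ (List.ofFn f)) =
      ∑ k : Fin d, ∑ l ∈ Finset.range n, ∑ f : Fin l → Fin d,
        sesqEval Z W (FreeAlgebra.ι ℂ k * S.φ (List.ofFn f)) := by
  rw [Finset.sum_range_succ', Finset.sum_comm]
  simp only [Fintype.sum_fin_succ_ofFn fun τ => sesqEval Z W (S.ιMulφ τ)]
  simp only [List.ofFn_zero, ιMulφ, sesqEval_zero, Finset.sum_const_zero, add_zero]

end SzegoSystem

theorem szego_summation_formula_general {d m : ℕ} (hd : 1 ≤ d) (S : SzegoSystem d)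
    (Z W : Fin d → Matrix (Fin m) (Fin m) ℂ) (n : ℕ) :
    star (evalM Z (S.φr (sigmaWord d hd n))) * evalM W (S.φr (sigmaWord d hd n)) -
        ∑ l ∈ Finset.range (n + 1), ∑ f : Fin l → Fin d,
          star (evalM Z (S.φ (List.ofFn f))) * evalM W (S.φ (List.ofFn f)) =
      -∑ k : Fin d, ∑ l ∈ Finset.range n, ∑ f : Fin l → Fin d,
          star (evalM Z (S.φ (List.ofFn f))) * (star (Z k) * W k) *
            evalM W (S.φ (List.ofFn f)) := by
  have h := S.sesqEval_φr_e_eq_sum Z W (S.e.symm (sigmaWord d hd n))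
  rw [S.e.apply_symm_apply, Finset.sum_sub_distrib,
    S.sum_range_symm_sigmaWord hd n (fun τ => sesqEval Z W (S.φ τ)),
    S.sum_range_symm_sigmaWord hd n (fun τ => sesqEval Z W (S.ιMulφ τ)),
    S.sum_length_lt_succ_sesqEval_ιMulφ] at h
  simp only [sesqEval_ι_mul] at h
  simp only [sesqEval] at h
  rw [h, sub_sub_cancel_left]

/-- the summation formula
`φ^#_{σ(n)}(Z)^* φ^#_{σ(n)}(W) − ∑_{|σ| ≤ n} φ_σ(Z)^* φ_σ(W)
  = − ∑_{k=1}^d ∑_{|σ| ≤ n−1} φ_σ(Z)^* Z_k^* W_k φ_σ(W)`,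
where words of length `l` are enumerated as `List.ofFn f`, `f : Fin l → Fin d` (the right-hand
side is the empty sum when `n = 0`). -/
theorem szego_summation_formula {d m : ℕ} (hd : 1 ≤ d) (hm : 1 ≤ m) (S : SzegoSystem d)
    (Z W : Fin d → Matrix (Fin m) (Fin m) ℂ) (n : ℕ) :
    star (evalM Z (S.φr (sigmaWord d hd n))) * evalM W (S.φr (sigmaWord d hd n)) -
        ∑ l ∈ Finset.range (n + 1), ∑ f : Fin l → Fin d,
          star (evalM Z (S.φ (List.ofFn f))) * evalM W (S.φ (List.ofFn f)) =
      -∑ k : Fin d, ∑ l ∈ Finset.range n, ∑ f : Fin l → Fin d,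
          star (evalM Z (S.φ (List.ofFn f))) * (star (Z k) * W k) *
            evalM W (S.φ (List.ofFn f)) :=
  szego_summation_formula_general hd S Z W n
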